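/- arXiv:math/9912245 — 3 statements merged into one kernel-verified Lean document; each statement's English description precedes it below -/
import Mathlib

section
/- Let (R, m, k) be a local Noetherian ring, I ⊆ m an ideal with I ⊇ mI, and suppose J ⊆ I with mI ⊆ J and J integral over mI. Let x_1, …, x_s ∈ I be elements whose images form a k-basis of I/J. Then the k-algebra homomorphism k[X_1, …, X_s] → R[IT]/(m·R[IT]) (into the fiber of the Rees algebra over the closed point) sending X_i to the class of x_i·T is a finite (module-finite) ring homomorphism. -/
/-!
Every element of the fiber ring `R[IT]/m R[IT]` is a polynomial over `k` in classes `yT` with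
`y ∈ I`. Writing `y = ∑ cᵢ xᵢ + j` with `j ∈ J`, the class of `jT` is nilpotent: an equation of
integral dependence of `j` over `mI` shows `jⁿ ∈ m Iⁿ`, i.e. `(jT)ⁿ ∈ m R[IT]`. Hence the fiber ring
is, modulo nilpotents, generated by the image of `k[X₁, …, Xₛ]`, so it is integral over it; being
of finite type over `R`, it is finite.
-/

open IsLocalRing Polynomial

theorem RingHom.IsIntegral.of_forall_exists_isNilpotent_sub {A B : Type*} [CommRing A]
    [CommRing B] (φ : A →+* B) (h : ∀ b, ∃ a, IsNilpotent (b - φ a)) : φ.IsIntegral := by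
  let _ := φ.toAlgebra
  intro b
  obtain ⟨a, n, hn⟩ := h b
  have hnil : _root_.IsIntegral A (b - φ a) :=
    ⟨X ^ n, monic_X_pow n, by rw [eval₂_X_pow, hn]⟩
  have : _root_.IsIntegral A (φ a + (b - φ a)) := isIntegral_algebraMap.add hnil
  rwa [add_sub_cancel] at this

theorem RingHom.exists_isNilpotent_sub_of_adjoin_eq_top {R A B : Type*} [CommRing R]
    [CommRing A] [CommRing B] [Algebra R B] (φ : A →+* B)
    (halg : ∀ r, algebraMap R B r ∈ φ.range) {s : Set B} (hs : Algebra.adjoin R s = ⊤)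
    (hnil : ∀ b ∈ s, ∃ a, IsNilpotent (b - φ a)) (b : B) : ∃ a, IsNilpotent (b - φ a) := by
  let π := Ideal.Quotient.mk (nilradical B)
  let T : Subring B := ((π.comp φ).range).comap π
  have hT : ∀ b, b ∈ T ↔ ∃ a, IsNilpotent (b - φ a) := fun b => by
    simp only [T, Subring.mem_comap, RingHom.mem_range, RingHom.comp_apply, π,
      Ideal.Quotient.eq, ← mem_nilradical]
    exact exists_congr fun a => by rw [← neg_mem_iff, neg_sub]
  have hle : Subring.closure (Set.range (algebraMap R B) ∪ s) ≤ T := by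
    refine Subring.closure_le.2 (Set.union_subset ?_ fun b hb => (hT b).2 (hnil b hb))
    rintro _ ⟨r, rfl⟩
    obtain ⟨a, ha⟩ := halg r
    exact (hT _).2 ⟨a, by rw [ha, sub_self]; exact IsNilpotent.zero⟩
  rw [← Algebra.adjoin_eq_ring_closure, hs] at hle
  exact (hT b).1 (hle trivial)

def Ideal.IsIntegralElem {R : Type*} [CommRing R] (𝔞 : Ideal R) (f : R) : Prop :=
  ∃ n : ℕ, 1 ≤ n ∧ ∃ a : ℕ → R, (∀ ν, 1 ≤ ν → ν ≤ n → a ν ∈ 𝔞 ^ ν) ∧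
    f ^ n + ∑ ν ∈ Finset.Icc 1 n, a ν * f ^ (n - ν) = 0

theorem Ideal.IsIntegralElem.exists_pow_mem_mul_pow {R : Type*} [CommRing R] {I K : Ideal R}
    {f : R} (h : (K * I).IsIntegralElem f) (hf : f ∈ I) : ∃ n, f ^ n ∈ K * I ^ n := by
  obtain ⟨n, -, a, ha, he⟩ := h
  refine ⟨n, ?_⟩
  rw [eq_neg_of_add_eq_zero_left he]
  refine neg_mem (Ideal.sum_mem _ fun ν hν => ?_)
  obtain ⟨hν₁, hν₂⟩ := Finset.mem_Icc.mp hν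
  have haν : a ν ∈ K * I ^ ν := by
    have := ha ν hν₁ hν₂
    rw [mul_pow] at this
    exact Ideal.mul_mono_left (Ideal.pow_le_self (by omega)) this
  have := Ideal.mul_mem_mul haν (Ideal.pow_mem_pow hf (n - ν))
  rwa [mul_assoc, ← pow_add, Nat.add_sub_cancel' hν₂] at this

theorem Submodule.smul_top_quotient_eq_bot {R M : Type*} [CommRing R] [AddCommGroup M]
    [Module R M] {K : Ideal R} {N : Submodule R M} (h : K • ⊤ ≤ N) :
    K • (⊤ : Submodule R (M ⧸ N)) = ⊥ := by
  rw [← N.range_mkQ, LinearMap.range_eq_map, ← Submodule.map_smul'', eq_bot_iff,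
    Submodule.map_le_iff_le_comap, Submodule.comap_bot, Submodule.ker_mkQ]
  exact h

theorem Submodule.exists_sub_sum_smul_mem_of_basis {R M ι : Type*} [CommRing R]
    [AddCommGroup M] [Module R M] [Fintype ι] {K : Ideal R} {N : Submodule R M}
    (hKN : K • ⊤ ≤ N) (x : ι → M)
    (b : Module.Basis ι (R ⧸ K) ((M ⧸ N) ⧸ K • (⊤ : Submodule R (M ⧸ N))))
    (hb : ∀ i, b i = Submodule.Quotient.mk (Submodule.Quotient.mk (x i))) (y : M) :
    ∃ c : ι → R, y - ∑ i, c i • x i ∈ N := by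
  let π : M →ₗ[R] (M ⧸ N) ⧸ K • (⊤ : Submodule R (M ⧸ N)) :=
    (K • (⊤ : Submodule R (M ⧸ N))).mkQ ∘ₗ N.mkQ
  choose c hc using fun i => Ideal.Quotient.mk_surjective (b.repr (π y) i)
  refine ⟨c, ?_⟩
  have hπ : π (y - ∑ i, c i • x i) = 0 := calc
    π (y - ∑ i, c i • x i) = π y - ∑ i, b.repr (π y) i • b i := by
      simp only [map_sub, map_sum, map_smul, ← hc, ← Ideal.Quotient.algebraMap_eq,
        algebraMap_smul, hb]
      rfl
    _ = 0 := by rw [b.sum_repr, sub_self]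
  rwa [LinearMap.comp_apply, Submodule.mkQ_apply, Submodule.mkQ_apply,
    Submodule.Quotient.mk_eq_zero, Submodule.smul_top_quotient_eq_bot hKN, Submodule.mem_bot,
    Submodule.Quotient.mk_eq_zero] at hπ

namespace reesAlgebra

variable {R : Type*} [CommRing R] (I : Ideal R)

/-- `y ↦ yT`, with `T` the variable of `R[X]`. -/
noncomputable def degreeOne : I →ₗ[R] reesAlgebra I where
  toFun y := ⟨monomial 1 (y : R), monomial_mem.mpr (by simp)⟩
  map_add' y z := by ext1; simp
  map_smul' c y := by ext1; simp [Algebra.smul_def, C_mul_monomial]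

theorem adjoin_range_degreeOne : Algebra.adjoin R (Set.range (degreeOne I)) = ⊤ := by
  apply Subalgebra.map_injective (f := (reesAlgebra I).val) Subtype.val_injective
  rw [Algebra.map_top, Subalgebra.range_val, ← Algebra.adjoin_image, ← Set.range_comp]
  convert adjoin_monomial_eq_reesAlgebra I
  ext p
  simp [degreeOne]

theorem monomial_mem_map_of_mem_mul_pow {K : Ideal R} {n : ℕ} {r : R} (hr : r ∈ K * I ^ n)
    (h : monomial n r ∈ reesAlgebra I) :
    (⟨monomial n r, h⟩ : reesAlgebra I) ∈ Ideal.map (algebraMap R (reesAlgebra I)) K := by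
  induction hr using Submodule.mul_induction_on' with
  | mem_mul_mem a ha b hb =>
    have e : (⟨monomial n (a * b), h⟩ : reesAlgebra I) =
        algebraMap R _ a * ⟨monomial n b, monomial_mem.mpr hb⟩ := by
      ext1; simp [C_mul_monomial]
    rw [e]
    exact Ideal.mul_mem_right _ _ (Ideal.mem_map_of_mem _ ha)
  | add r₁ hr₁ r₂ hr₂ ih₁ ih₂ =>
    have e : (⟨monomial n (r₁ + r₂), h⟩ : reesAlgebra I) =
        ⟨monomial n r₁, monomial_mem.mpr (Ideal.mul_le_right hr₁)⟩ +
          ⟨monomial n r₂, monomial_mem.mpr (Ideal.mul_le_right hr₂)⟩ := by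
      ext1; simp
    rw [e]
    exact add_mem (ih₁ _) (ih₂ _)

theorem isNilpotent_degreeOne {F : Type*} [CommRing F] [Algebra R F]
    (π : reesAlgebra I →ₐ[R] F) {K : Ideal R} (hK : ∀ r ∈ K, algebraMap R F r = 0)
    {f : I} (hf : (K * I).IsIntegralElem f) :
    IsNilpotent (π (degreeOne I f)) := by
  have hKπ : Ideal.map (algebraMap R (reesAlgebra I)) K ≤ RingHom.ker π :=
    Ideal.map_le_iff_le_comap.2 fun r hr => by simpa using hK r hr
  obtain ⟨n, hn⟩ := hf.exists_pow_mem_mul_pow f.2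
  refine ⟨n, ?_⟩
  rw [← map_pow, ← RingHom.mem_ker]
  refine hKπ ?_
  convert monomial_mem_map_of_mem_mul_pow I hn (monomial_mem.mpr (Ideal.pow_mem_pow f.2 n))
  ext1
  simp [degreeOne, monomial_pow]

theorem finite_of_basis {F : Type*} [CommRing F] [Algebra R F] [IsNoetherianRing R]
    {ι : Type*} [Fintype ι] {J K : Ideal R}
    (hKJ : K * I ≤ J)
    (hint : ∀ f ∈ J, (K * I).IsIntegralElem f)
    (x : ι → I) (b : Module.Basis ι (R ⧸ K) ((I ⧸ Submodule.comap I.subtype J) ⧸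
      K • (⊤ : Submodule R (I ⧸ Submodule.comap I.subtype J))))
    (hb : ∀ i, b i = Submodule.Quotient.mk (Submodule.Quotient.mk (x i)))
    (π : reesAlgebra I →ₐ[R] F) (hπ : Function.Surjective π)
    (hK : ∀ r ∈ K, algebraMap R F r = 0) (φ : MvPolynomial ι (R ⧸ K) →+* F)
    (hC : ∀ r, φ (MvPolynomial.C (Ideal.Quotient.mk K r)) = algebraMap R F r)
    (hX : ∀ i, φ (MvPolynomial.X i) = π (degreeOne I (x i))) :
    φ.Finite := by
  have hJ : K • ⊤ ≤ Submodule.comap I.subtype J := by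
    rw [← Submodule.map_le_iff_le_comap, Submodule.map_smul'', Submodule.map_top,
      Submodule.range_subtype, Ideal.smul_eq_mul]
    exact hKJ
  refine RingHom.IsIntegral.to_finite
    (RingHom.IsIntegral.of_forall_exists_isNilpotent_sub φ fun z => ?_) ?_
  · refine φ.exists_isNilpotent_sub_of_adjoin_eq_top (fun r => ⟨_, hC r⟩)
      (s := Set.range (π ∘ degreeOne I)) ?_ ?_ z
    · rw [Set.range_comp, Algebra.adjoin_image, adjoin_range_degreeOne,
        Algebra.map_top, AlgHom.range_eq_top]
      exact hπ
    rintro _ ⟨y, rfl⟩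
    obtain ⟨c, hc⟩ := Submodule.exists_sub_sum_smul_mem_of_basis hJ _ b hb y
    -- `yT ≡ ∑ cᵢ xᵢT` modulo the nilpotent class of `(y - ∑ cᵢ xᵢ)T`
    refine ⟨∑ i, MvPolynomial.C (Ideal.Quotient.mk _ (c i)) * MvPolynomial.X i, ?_⟩
    convert isNilpotent_degreeOne I π hK (hint (y - ∑ i, c i • x i : I) hc) using 1
    simp [hC, hX, map_sub, map_sum, Algebra.smul_def]
  · have hφC : φ.comp (MvPolynomial.C.comp (Ideal.Quotient.mk K)) = algebraMap R F :=
      RingHom.ext hC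
    refine RingHom.FiniteType.of_comp_finiteType (f := MvPolynomial.C.comp (Ideal.Quotient.mk K)) ?_
    rw [hφC]
    exact RingHom.finiteType_algebraMap.2 (.of_surjective π hπ)

end reesAlgebra

/-- Let `(R,m,k)` be a Noetherian local ring, `I ⊆ m` an ideal, `mI ⊆ J ⊆ I` with `J`
integral over `mI`, and let `x_1, …, x_s ∈ I` have images forming a `k`-basis of `I/J`
(realized as `(I/J)⧸ m•⊤`).  Then the `k`-algebra homomorphism
`k[X_1,…,X_s] → R[IT]/(m·R[IT])` sending `X_i` to the class of `x_i·T` is finite. -/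
theorem stmt_2 (R : Type*) [CommRing R] [IsNoetherianRing R] [IsLocalRing R]
    (I J : Ideal R)
    (hmJ : maximalIdeal R * I ≤ J)
    (hint : ∀ f ∈ J, ∃ n : ℕ, 1 ≤ n ∧ ∃ a : ℕ → R,
      (∀ ν, 1 ≤ ν → ν ≤ n → a ν ∈ (maximalIdeal R * I) ^ ν) ∧
      f ^ n + ∑ ν ∈ Finset.Icc 1 n, a ν * f ^ (n - ν) = 0)
    (s : ℕ) (x : Fin s → R) (hx : ∀ i, x i ∈ I)
    (b : Module.Basis (Fin s) (R ⧸ maximalIdeal R)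
      (((↥I) ⧸ (Submodule.comap I.subtype J)) ⧸
        (maximalIdeal R • (⊤ : Submodule R ((↥I) ⧸ (Submodule.comap I.subtype J))))))
    (hb : ∀ i, b i = Submodule.Quotient.mk (Submodule.Quotient.mk ⟨x i, hx i⟩)) :
    RingHom.Finite
      (MvPolynomial.eval₂Hom
        (Ideal.Quotient.lift (maximalIdeal R)
          ((Ideal.Quotient.mk
              (Ideal.map (algebraMap R (reesAlgebra I)) (maximalIdeal R))).comp
            (algebraMap R (reesAlgebra I)))
          (fun a ha => Ideal.Quotient.eq_zero_iff_mem.mpr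
            (Ideal.mem_map_of_mem _ ha)))
        (fun i =>
          Ideal.Quotient.mk (Ideal.map (algebraMap R (reesAlgebra I)) (maximalIdeal R))
            ⟨Polynomial.monomial 1 (x i),
              reesAlgebra.monomial_mem.mpr (by simpa using hx i)⟩)) := by
  refine reesAlgebra.finite_of_basis I
    (F := reesAlgebra I ⧸ Ideal.map (algebraMap R (reesAlgebra I)) (maximalIdeal R))
    hmJ hint (fun i => ⟨x i, hx i⟩) b hb
    (Ideal.Quotient.mkₐ R _) (Ideal.Quotient.mkₐ_surjective R _) ?_ _ ?_ ?_
  · intro r hr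
    rw [← Ideal.Quotient.mk_algebraMap, Ideal.Quotient.eq_zero_iff_mem]
    exact Ideal.mem_map_of_mem _ hr
  · intro r
    rw [MvPolynomial.eval₂Hom_C, Ideal.Quotient.lift_mk, RingHom.comp_apply,
      Ideal.Quotient.mk_algebraMap]
  · exact fun i => MvPolynomial.eval₂Hom_X' _ _ i
end

section
/- Let A → B be a flat local homomorphism of Noetherian local rings, F• a bounded-above complex of finitely generated free B-modules, and k ∈ ℤ. Suppose that the truncated complex (… → F^{k-1} → F^k → F^k/∂F^{k-1} → 0) becomes exact after tensoring with A/m_A over A, and that (F^k/∂F^{k-1}) ⊗_A A/m_A is a free B/m_A B-module. Then for all n ≥ 1 the complex tensored with A/m_A^n is exact and (F^k/∂F^{k-1}) ⊗_A A/m_A^n is a free B/m_A^n B-module; consequently the original truncated complex is exact and F^k/∂F^{k-1} is a free B-module. -/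
/-!
Put `J = m_A B`. Lifting a basis of `Q/JQ`, `Q = F^{k+1}/∂F^k`, and its coordinate functionals
gives maps `e : B^(ι) → F^{k+1}` and `φ : F^{k+1} → B^(ι)` that split the augmented complex
`⋯ → F^k → F^{k+1} → B^(ι)` modulo `J`. A right-bounded complex of projectives that is exact
modulo `J` has a contracting homotopy modulo `J`, and it lifts to `B`; a lifted homotopy
`1 ≡ ∂h + h∂ (mod J)` upgrades exactness modulo `J^n` to exactness modulo `J^{n+1}`. The same
induction puts the kernel of `B^(ι) → Q` inside `⋂ₙ Jⁿ B^(ι) = 0` (Krull), while Nakayama makes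
this map surjective, so `Q` is free; Krull's theorem also gives exactness of `F` itself.
-/

open IsLocalRing

/-- Reduction of a linear map modulo an ideal: the induced map
`M/IM → N/IN`. -/
noncomputable def idealRed {B M N : Type*} [CommRing B] [AddCommGroup M] [Module B M]
    [AddCommGroup N] [Module B N] (I : Ideal B) (f : M →ₗ[B] N) :
    (M ⧸ (I • ⊤ : Submodule B M)) →ₗ[B] (N ⧸ (I • ⊤ : Submodule B N)) :=
  Submodule.mapQ _ _ f (by
    refine Submodule.smul_le.2 fun r hr m _ => ?_
    refine Submodule.mem_comap.2 ?_
    rw [map_smul]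
    exact Submodule.smul_mem_smul hr Submodule.mem_top)

section

variable {R M N P : Type*} [CommRing R] [AddCommGroup M] [Module R M] [AddCommGroup N]
  [Module R N] [AddCommGroup P] [Module R P]

@[simp]
lemma idealRed_mk (I : Ideal R) (f : M →ₗ[R] N) (x : M) :
    idealRed I f (Submodule.Quotient.mk x) = Submodule.Quotient.mk (f x) :=
  rfl

lemma Submodule.mkQ_mem_smul_top_iff (N : Submodule R M) (I : Ideal R) (x : M) :
    N.mkQ x ∈ (I • ⊤ : Submodule R (M ⧸ N)) ↔ x ∈ N ⊔ I • ⊤ := by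
  rw [← mem_comap, comap_smul_top_of_surjective _ _ N.mkQ_surjective, ker_mkQ, sup_comm]

lemma exact_idealRed_iff (I : Ideal R) {f : M →ₗ[R] N} {g : N →ₗ[R] P} (hfg : g ∘ₗ f = 0) :
    Function.Exact (idealRed I f) (idealRed I g) ↔
      ∀ x, g x ∈ (I • ⊤ : Submodule R P) → x ∈ LinearMap.range f ⊔ I • ⊤ := by
  have hrange : ∀ x : N, (Submodule.Quotient.mk x : N ⧸ (I • ⊤ : Submodule R N)) ∈
      Set.range (idealRed I f) ↔ x ∈ LinearMap.range f ⊔ I • ⊤ := by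
    intro x
    constructor
    · rintro ⟨y, hy⟩
      obtain ⟨z, rfl⟩ := Submodule.Quotient.mk_surjective _ y
      rw [idealRed_mk, Submodule.Quotient.eq] at hy
      exact Submodule.mem_sup.2
        ⟨f z, ⟨z, rfl⟩, x - f z, by simpa using Submodule.neg_mem _ hy, by abel⟩
    · intro hx
      obtain ⟨_, ⟨z, rfl⟩, u, hu, rfl⟩ := Submodule.mem_sup.1 hx
      exact ⟨Submodule.Quotient.mk z,
        by simpa [Submodule.Quotient.eq] using Submodule.neg_mem _ hu⟩
  refine ⟨fun h x hx => ?_, fun h y => ?_⟩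
  · rw [← hrange, ← h, idealRed_mk, Submodule.Quotient.mk_eq_zero]
    exact hx
  · obtain ⟨x, rfl⟩ := Submodule.Quotient.mk_surjective _ y
    rw [hrange, idealRed_mk, Submodule.Quotient.mk_eq_zero]
    refine ⟨h x, fun hx => ?_⟩
    obtain ⟨_, ⟨z, rfl⟩, u, hu, rfl⟩ := Submodule.mem_sup.1 hx
    rw [map_add, ← LinearMap.comp_apply, hfg, LinearMap.zero_apply, zero_add]
    exact Submodule.smul_top_le_comap_smul_top I g hu

lemma LinearMap.map_mem_mul_smul_top {I K : Ideal R} (f : M →ₗ[R] N)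
    (hf : ∀ x, f x ∈ (K • ⊤ : Submodule R N)) {x : M} (hx : x ∈ (I • ⊤ : Submodule R M)) :
    f x ∈ ((I * K) • ⊤ : Submodule R N) := by
  have : (I • ⊤ : Submodule R M).map f ≤ (I * K) • ⊤ := by
    rw [Submodule.map_smul'', Submodule.mul_smul]
    exact Submodule.smul_mono le_rfl (Submodule.map_le_iff_le_comap.2 fun y _ => hf y)
  exact this ⟨x, hx, rfl⟩

lemma Module.Projective.exists_sub_mem_of_range_le [Module.Projective R P] (f : N →ₗ[R] M)
    (c : P →ₗ[R] M) {K : Submodule R M} (hc : LinearMap.range c ≤ LinearMap.range f ⊔ K) :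
    ∃ g : P →ₗ[R] N, ∀ x, f (g x) - c x ∈ K := by
  have hc' : LinearMap.range c ≤ LinearMap.range (f.coprod K.subtype) := by
    rwa [LinearMap.range_coprod, Submodule.range_subtype]
  obtain ⟨h, hh⟩ := Module.projective_lifting_property _
    (c.codRestrict _ fun x => hc' ⟨x, rfl⟩) (LinearMap.surjective_rangeRestrict _)
  refine ⟨LinearMap.fst _ _ _ ∘ₗ h, fun x => ?_⟩
  have := congrArg Subtype.val (LinearMap.congr_fun hh x)
  simp only [LinearMap.comp_codRestrict, LinearMap.codRestrict_apply, LinearMap.coe_comp,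
    Function.comp_apply, LinearMap.coprod_apply, Submodule.subtype_apply] at this
  rw [LinearMap.comp_apply, LinearMap.fst_apply, ← this, sub_add_cancel_left]
  exact K.neg_mem (h x).2.2

lemma Finsupp.mem_ideal_smul_top_iff {ι : Type*} (I : Ideal R) (v : ι →₀ R) :
    v ∈ (I • ⊤ : Submodule R (ι →₀ R)) ↔ ∀ i, v i ∈ I := by
  rw [← Finsupp.submodule_top, ← Finsupp.submodule_smul, Finsupp.mem_submodule_iff]
  simp only [smul_eq_mul, Ideal.mul_top]

lemma Submodule.mem_of_forall_mem_sup_pow_smul_top [IsNoetherianRing R] [IsLocalRing R]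
    [Module.Finite R M] {J : Ideal R} (hJ : J ≠ ⊤) {N : Submodule R M} {x : M}
    (h : ∀ n : ℕ, x ∈ N ⊔ J ^ n • ⊤) : x ∈ N := by
  have : N.mkQ x ∈ (⨅ n : ℕ, J ^ n • ⊤ : Submodule R (M ⧸ N)) := by
    rw [Submodule.mem_iInf]
    exact fun n => (N.mkQ_mem_smul_top_iff (J ^ n) x).2 (h n)
  rwa [Ideal.iInf_pow_smul_eq_bot_of_isLocalRing _ hJ, Submodule.mem_bot, Submodule.mkQ_apply,
    Submodule.Quotient.mk_eq_zero] at this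

instance Module.Free.quotient_smul_top [Module.Free R M] (I : Ideal R) :
    Module.Free (R ⧸ I) (M ⧸ (I • ⊤ : Submodule R M)) :=
  Module.Free.of_equiv ((TensorProduct.quotTensorEquivQuotSMul M I).extendScalarsOfSurjective
    Ideal.Quotient.mk_surjective)

/- `e` lifts a basis of `Q/JQ` and `φ` the coordinate functionals; modulo `J` they split
`M → P → R^(ι)`. -/
theorem exists_splitting_mod [Module.Projective R P] (d : M →ₗ[R] P) (J : Ideal R) {ι : Type*}
    (b : Module.Basis ι (R ⧸ J) ((P ⧸ LinearMap.range d) ⧸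
      (J • ⊤ : Submodule R (P ⧸ LinearMap.range d)))) :
    ∃ (e : (ι →₀ R) →ₗ[R] P) (φ : P →ₗ[R] (ι →₀ R)),
      (∀ x, x - e (φ x) ∈ LinearMap.range d ⊔ J • ⊤) ∧
      (∀ y, φ (d y) ∈ (J • ⊤ : Submodule R _)) ∧
      (∀ v, φ (e v) - v ∈ (J • ⊤ : Submodule R _)) ∧
      Function.Surjective
        ((J • ⊤ : Submodule R (P ⧸ LinearMap.range d)).mkQ ∘ₗ (LinearMap.range d).mkQ ∘ₗ e) := by
  set θ := (J • ⊤ : Submodule R (P ⧸ LinearMap.range d)).mkQ ∘ₗ (LinearMap.range d).mkQ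
  have hθ : Function.Surjective θ :=
    (Submodule.mkQ_surjective _).comp (Submodule.mkQ_surjective _)
  have hθ_eq_zero : ∀ x, θ x = 0 ↔ x ∈ LinearMap.range d ⊔ J • ⊤ := fun x => by
    rw [← Submodule.mkQ_mem_smul_top_iff, LinearMap.comp_apply, Submodule.mkQ_apply,
      Submodule.Quotient.mk_eq_zero]
  set ψ : (ι →₀ R) →ₗ[R] _ :=
    (b.repr.restrictScalars R).symm.toLinearMap ∘ₗ Finsupp.mapRange.linearMap J.mkQ
  have hψ : Function.Surjective ψ := by
    rw [LinearMap.coe_comp]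
    exact (LinearEquiv.surjective _).comp
      (Finsupp.mapRange_surjective _ (map_zero _) J.mkQ_surjective)
  have hψ_eq_zero : ∀ v, ψ v = 0 ↔ v ∈ (J • ⊤ : Submodule R _) := fun v => by
    rw [← LinearMap.mem_ker, LinearEquiv.ker_comp, Finsupp.mem_ideal_smul_top_iff,
      LinearMap.mem_ker, Finsupp.ext_iff]
    simp [Ideal.Quotient.eq_zero_iff_mem]
  obtain ⟨e, he⟩ := Module.projective_lifting_property θ ψ hθ
  obtain ⟨φ, hφ⟩ := Module.projective_lifting_property ψ θ hψ
  have hθe : ∀ v, θ (e v) = ψ v := LinearMap.congr_fun he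
  have hψφ : ∀ x, ψ (φ x) = θ x := LinearMap.congr_fun hφ
  refine ⟨e, φ, fun x => ?_, fun y => ?_, fun v => ?_, he ▸ hψ⟩
  · rw [← hθ_eq_zero, map_sub, hθe, hψφ, sub_self]
  · rw [← hψ_eq_zero, hψφ, hθ_eq_zero]
    exact Submodule.mem_sup_left ⟨y, rfl⟩
  · rw [← hψ_eq_zero, map_sub, hψφ, hθe, sub_self]

theorem mem_pow_smul_top_of_map_mem_range {L : Type*} [AddCommGroup L] [Module R L] {J : Ideal R}
    (f : L →ₗ[R] M) (d : M →ₗ[R] P) (hfd : d ∘ₗ f = 0)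
    (hexact : ∀ n : ℕ, ∀ x, d x ∈ (J ^ n • ⊤ : Submodule R P) → x ∈ LinearMap.range f ⊔ J ^ n • ⊤)
    (e : N →ₗ[R] P) (φ : P →ₗ[R] N) (hφd : ∀ y, φ (d y) ∈ (J • ⊤ : Submodule R N))
    (hφe : ∀ v, φ (e v) - v ∈ (J • ⊤ : Submodule R N)) {v : N} (hv : e v ∈ LinearMap.range d)
    (n : ℕ) : v ∈ (J ^ n • ⊤ : Submodule R N) := by
  induction n with
  | zero => simp
  | succ n ih =>
    obtain ⟨z, hz⟩ := hv
    have hdz : d z ∈ (J ^ n • ⊤ : Submodule R P) := hz ▸ Submodule.smul_top_le_comap_smul_top _ e ih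
    obtain ⟨_, ⟨w, rfl⟩, u, hu, rfl⟩ := Submodule.mem_sup.1 (hexact n z hdz)
    have hφdu : φ (d u) ∈ (J ^ (n + 1) • ⊤ : Submodule R N) :=
      pow_succ J n ▸ (φ ∘ₗ d).map_mem_mul_smul_top hφd hu
    have hφev : φ (e v) - v ∈ (J ^ (n + 1) • ⊤ : Submodule R N) :=
      pow_succ J n ▸ (φ ∘ₗ e - LinearMap.id).map_mem_mul_smul_top hφe ih
    have hv_eq : v = φ (d u) - (φ (e v) - v) := by
      rw [← hz, map_add, ← LinearMap.comp_apply d f, hfd, LinearMap.zero_apply, zero_add]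
      abel
    rw [hv_eq]
    exact Submodule.sub_mem _ hφdu hφev

theorem bijective_mkQ_comp_of_splitting_mod [IsNoetherianRing R] [IsLocalRing R]
    [Module.Finite R P] {L : Type*} [AddCommGroup L] [Module R L] {J : Ideal R} (hJ : J ≠ ⊤)
    {ι : Type*} (f : L →ₗ[R] M) (d : M →ₗ[R] P) (hfd : d ∘ₗ f = 0)
    (hexact : ∀ n : ℕ, ∀ x, d x ∈ (J ^ n • ⊤ : Submodule R P) → x ∈ LinearMap.range f ⊔ J ^ n • ⊤)
    (e : (ι →₀ R) →ₗ[R] P) (φ : P →ₗ[R] (ι →₀ R)) (hφd : ∀ y, φ (d y) ∈ (J • ⊤ : Submodule R _))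
    (hφe : ∀ v, φ (e v) - v ∈ (J • ⊤ : Submodule R _))
    (he : Function.Surjective
      ((J • ⊤ : Submodule R (P ⧸ LinearMap.range d)).mkQ ∘ₗ (LinearMap.range d).mkQ ∘ₗ e)) :
    Function.Bijective ((LinearMap.range d).mkQ ∘ₗ e) := by
  refine ⟨(injective_iff_map_eq_zero _).2 fun v hv => ?_,
    LinearMap.surjective_of_surjective_comp_mkQ _ J
      ((le_maximalIdeal hJ).trans (maximalIdeal_le_jacobson _)) he⟩
  rw [LinearMap.comp_apply, Submodule.mkQ_apply, Submodule.Quotient.mk_eq_zero] at hv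
  have hvJ := mem_pow_smul_top_of_map_mem_range f d hfd hexact e φ hφd hφe hv
  ext i
  have : v i ∈ ⨅ n : ℕ, J ^ n :=
    Ideal.mem_iInf.2 fun n => (Finsupp.mem_ideal_smul_top_iff _ v).1 (hvJ n) i
  rwa [Ideal.iInf_pow_eq_bot_of_isLocalRing J hJ, Ideal.mem_bot] at this

end

section Homotopy

variable {R : Type*} [CommRing R] (J : Ideal R) {F : ℤ → Type*} [∀ i, AddCommGroup (F i)]
  [∀ i, Module R (F i)] [∀ i, Module.Projective R (F i)]
  (d : ∀ i : ℤ, F i →ₗ[R] F (i + 1)) (k : ℤ)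

/- Built downwards from degree `k`; `T` plays the part of the missing term `g (k + 1) ∘ d (k + 1)`
of the contracting homotopy. -/
theorem exists_homotopy_mod (hdd : ∀ i, d (i + 1) ∘ₗ d i = 0)
    (hexact : ∀ j < k, ∀ x : F (j + 1), d (j + 1) x ∈ (J • ⊤ : Submodule R _) →
      x ∈ LinearMap.range (d j) ⊔ J • ⊤)
    (T : F (k + 1) →ₗ[R] F (k + 1)) (hT : ∀ x, x - T x ∈ LinearMap.range (d k) ⊔ J • ⊤)
    (hTd : ∀ y, T (d k y) ∈ (J • ⊤ : Submodule R _)) :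
    ∀ j ≤ k, ∃ (g : F (j + 1) →ₗ[R] F j) (r : F (j + 1) →ₗ[R] F (j + 1)),
      (∀ x, x - r x - d j (g x) ∈ (J • ⊤ : Submodule R _)) ∧
      (∀ y, r (d j y) ∈ (J • ⊤ : Submodule R _)) ∧
      (j < k → ∃ g' : F (j + 1 + 1) →ₗ[R] F (j + 1), r = g' ∘ₗ d (j + 1)) := by
  suffices ∀ m : ℕ, ∀ j, j + m = k → ∃ (g : F (j + 1) →ₗ[R] F j) (r : F (j + 1) →ₗ[R] F (j + 1)),
      (∀ x, x - r x - d j (g x) ∈ (J • ⊤ : Submodule R _)) ∧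
      (∀ y, r (d j y) ∈ (J • ⊤ : Submodule R _)) ∧
      (j < k → ∃ g' : F (j + 1 + 1) →ₗ[R] F (j + 1), r = g' ∘ₗ d (j + 1)) from
    fun j hj => this (k - j).toNat j (by omega)
  intro m
  induction m with
  | zero =>
    rintro j hj
    obtain rfl : j = k := by simpa using hj
    obtain ⟨g, hg⟩ := Module.Projective.exists_sub_mem_of_range_le (d j) (LinearMap.id - T)
      (K := J • ⊤) (by rintro _ ⟨x, rfl⟩; exact hT x)
    refine ⟨g, T, fun x => ?_, hTd, fun h => absurd h (lt_irrefl j)⟩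
    simpa using Submodule.neg_mem _ (hg x)
  | succ m ih =>
    intro j hj
    obtain ⟨g', r', hg'r', hr'd, -⟩ := ih (j + 1) (by omega)
    obtain ⟨g, hg⟩ := Module.Projective.exists_sub_mem_of_range_le (d j)
      (LinearMap.id - g' ∘ₗ d (j + 1)) (K := J • ⊤) (by
        rintro _ ⟨x, rfl⟩
        refine hexact j (by omega) _ ?_
        show d (j + 1) (x - g' (d (j + 1) x)) ∈ _
        have : d (j + 1) (x - g' (d (j + 1) x)) =
            (d (j + 1) x - r' (d (j + 1) x) - d (j + 1) (g' (d (j + 1) x))) + r' (d (j + 1) x) := by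
          rw [map_sub]; abel
        rw [this]
        exact Submodule.add_mem _ (hg'r' _) (hr'd x))
    refine ⟨g, g' ∘ₗ d (j + 1), fun x => ?_, fun y => ?_, fun _ => ⟨g', rfl⟩⟩
    · simpa using Submodule.neg_mem _ (hg x)
    · simp [← LinearMap.comp_apply (d (j + 1)), hdd]

theorem exact_mod_pow (hdd : ∀ i, d (i + 1) ∘ₗ d i = 0)
    (hexact : ∀ j < k, ∀ x : F (j + 1), d (j + 1) x ∈ (J • ⊤ : Submodule R _) →
      x ∈ LinearMap.range (d j) ⊔ J • ⊤)
    (T : F (k + 1) →ₗ[R] F (k + 1)) (hT : ∀ x, x - T x ∈ LinearMap.range (d k) ⊔ J • ⊤)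
    (hTd : ∀ y, T (d k y) ∈ (J • ⊤ : Submodule R _)) (n : ℕ) :
    ∀ j < k, ∀ x : F (j + 1),
      d (j + 1) x ∈ (J ^ n • ⊤ : Submodule R _) → x ∈ LinearMap.range (d j) ⊔ J ^ n • ⊤ := by
  induction n with
  | zero => simp
  | succ n ih =>
    intro j hj x hx
    obtain ⟨_, ⟨y, rfl⟩, u, hu, rfl⟩ :=
      Submodule.mem_sup.1 (ih j hj x (Submodule.pow_smul_top_le J _ n.le_succ hx))
    obtain ⟨g, r, hgr, -, hr⟩ := exists_homotopy_mod J d k hdd hexact T hT hTd j hj.le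
    obtain ⟨g', rfl⟩ := hr hj
    have hdu : d (j + 1) u ∈ (J ^ (n + 1) • ⊤ : Submodule R _) := by
      simpa [← LinearMap.comp_apply (d (j + 1)), hdd] using hx
    have hgdu : g' (d (j + 1) u) ∈ (J ^ (n + 1) • ⊤ : Submodule R _) :=
      Submodule.smul_top_le_comap_smul_top _ g' hdu
    have hrest : u - g' (d (j + 1) u) - d j (g u) ∈ (J ^ (n + 1) • ⊤ : Submodule R _) := by
      rw [pow_succ]
      exact (LinearMap.id - g' ∘ₗ d (j + 1) - d j ∘ₗ g).map_mem_mul_smul_top hgr hu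
    refine Submodule.mem_sup.2 ⟨d j (y + g u), ⟨_, rfl⟩, _, Submodule.add_mem _ hrest hgdu, ?_⟩
    rw [map_add]
    abel

end Homotopy

theorem stmt_8_general (A B : Type*) [CommRing A] [CommRing B] [Algebra A B]
    [IsNoetherianRing B] [IsLocalRing A] [IsLocalRing B]
    [IsLocalHom (algebraMap A B)]
    (F : ℤ → Type*) [∀ i, AddCommGroup (F i)] [∀ i, Module B (F i)]
    [∀ i, Module.Free B (F i)] [∀ i, Module.Finite B (F i)]
    (d : ∀ i : ℤ, F i →ₗ[B] F (i + 1)) (hdd : ∀ i, (d (i + 1)).comp (d i) = 0)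
    (k : ℤ)
    -- the ideals `m_A^n·B`
    (I : ℕ → Ideal B)
    (hI : ∀ n, I n = Ideal.map (algebraMap A B) ((maximalIdeal A) ^ n))
    -- hypothesis: the truncated complex is exact mod `m_A` and the reduction of the
    -- cokernel is free over `B/m_A B`
    (h1 : ∀ j : ℤ, j < k → Function.Exact (idealRed (I 1) (d j)) (idealRed (I 1) (d (j + 1))))
    (h3 : Module.Free (B ⧸ I 1)
      ((F (k + 1) ⧸ LinearMap.range (d k)) ⧸
        ((I 1) • (⊤ : Submodule B (F (k + 1) ⧸ LinearMap.range (d k)))))) :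
    (∀ n : ℕ, 1 ≤ n →
      (∀ j : ℤ, j < k →
        Function.Exact (idealRed (I n) (d j)) (idealRed (I n) (d (j + 1)))) ∧
      Function.Exact (idealRed (I n) (d k))
        (idealRed (I n) (LinearMap.range (d k)).mkQ) ∧
      Module.Free (B ⧸ I n)
        ((F (k + 1) ⧸ LinearMap.range (d k)) ⧸
          ((I n) • (⊤ : Submodule B (F (k + 1) ⧸ LinearMap.range (d k)))))) ∧
    (∀ j : ℤ, j < k → Function.Exact (d j) (d (j + 1))) ∧
    Function.Exact (d k) (LinearMap.range (d k)).mkQ ∧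
    Module.Free B (F (k + 1) ⧸ LinearMap.range (d k)) := by
  -- `F k` is not definitionally `F (k - 1 + 1)`: shift `k` so the cokernel is that of `d (k + 1)`
  obtain ⟨k, rfl⟩ : ∃ k', k = k' + 1 := ⟨k - 1, by omega⟩
  set J := (maximalIdeal A).map (algebraMap A B)
  have hJ : J ≠ ⊤ := ne_top_of_le_ne_top (maximalIdeal.isMaximal B).ne_top
    (map_maximalIdeal_le (algebraMap A B))
  obtain rfl : I = (J ^ ·) := funext fun n => by rw [hI, Ideal.map_pow]
  beta_reduce at h1 h3 ⊢
  rw [pow_one] at h1 h3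
  have hexact₁ := fun j hj => (exact_idealRed_iff J (hdd j)).1 (h1 j hj)
  obtain ⟨e, φ, hT, hφd, hφe, he⟩ :=
    exists_splitting_mod (d (k + 1)) J (Module.Free.chooseBasis (B ⧸ J) _)
  have hexact (n : ℕ) := exact_mod_pow J d (k + 1) hdd hexact₁ (e ∘ₗ φ) hT
    (fun y => Submodule.smul_top_le_comap_smul_top J e (hφd y)) n
  have hfree : Module.Free B (F (k + 1 + 1) ⧸ LinearMap.range (d (k + 1))) :=
    Module.Free.of_equiv (LinearEquiv.ofBijective _ (bijective_mkQ_comp_of_splitting_mod hJ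
      (d k) (d (k + 1)) (hdd k) (fun n => hexact n k (lt_add_one k)) e φ hφd hφe he))
  refine ⟨fun n _ => ⟨fun j hj => (exact_idealRed_iff _ (hdd j)).2 (hexact n j hj),
    (exact_idealRed_iff _ (LinearMap.range_mkQ_comp _)).2 fun x hx =>
      ((LinearMap.range _).mkQ_mem_smul_top_iff _ x).1 hx, inferInstance⟩,
    fun j hj => LinearMap.exact_iff.2 (le_antisymm (fun x hx => ?_) ?_),
    LinearMap.exact_iff.2 (Submodule.ker_mkQ _), hfree⟩
  · refine Submodule.mem_of_forall_mem_sup_pow_smul_top hJ fun n => hexact n j hj x ?_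
    rw [LinearMap.mem_ker.1 hx]
    exact Submodule.zero_mem _
  · exact LinearMap.range_le_ker_iff.2 (hdd j)

/-- Let `A → B` be a flat local homomorphism of Noetherian local rings and `F•` a
bounded-above complex of finitely generated free `B`-modules.  If the truncated complex
`⋯ → F^k → F^{k+1} → F^{k+1}/∂F^k → 0` becomes exact modulo `m_A` with
`(F^{k+1}/∂F^k) ⊗ A/m_A` free over `B/m_A B`, then for all `n ≥ 1` the complex reduced
modulo `m_A^n` is exact with `(F^{k+1}/∂F^k) ⊗ A/m_A^n` free over `B/m_A^n B`, and
consequently the original truncated complex is exact and `F^{k+1}/∂F^k` is a free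
`B`-module. -/
theorem stmt_8 (A B : Type*) [CommRing A] [CommRing B] [Algebra A B]
    [IsNoetherianRing A] [IsNoetherianRing B] [IsLocalRing A] [IsLocalRing B]
    [Module.Flat A B] [IsLocalHom (algebraMap A B)]
    (F : ℤ → Type*) [∀ i, AddCommGroup (F i)] [∀ i, Module B (F i)]
    [∀ i, Module.Free B (F i)] [∀ i, Module.Finite B (F i)]
    (hbd : ∃ N : ℤ, ∀ i, N < i → Subsingleton (F i))
    (d : ∀ i : ℤ, F i →ₗ[B] F (i + 1)) (hdd : ∀ i, (d (i + 1)).comp (d i) = 0)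
    (k : ℤ)
    -- the ideals `m_A^n·B`
    (I : ℕ → Ideal B)
    (hI : ∀ n, I n = Ideal.map (algebraMap A B) ((maximalIdeal A) ^ n))
    -- hypothesis: the truncated complex is exact mod `m_A` and the reduction of the
    -- cokernel is free over `B/m_A B`
    (h1 : ∀ j : ℤ, j < k → Function.Exact (idealRed (I 1) (d j)) (idealRed (I 1) (d (j + 1))))
    (h2 : Function.Exact (idealRed (I 1) (d k))
      (idealRed (I 1) (LinearMap.range (d k)).mkQ))
    (h3 : Module.Free (B ⧸ I 1)
      ((F (k + 1) ⧸ LinearMap.range (d k)) ⧸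
        ((I 1) • (⊤ : Submodule B (F (k + 1) ⧸ LinearMap.range (d k)))))) :
    (∀ n : ℕ, 1 ≤ n →
      (∀ j : ℤ, j < k →
        Function.Exact (idealRed (I n) (d j)) (idealRed (I n) (d (j + 1)))) ∧
      Function.Exact (idealRed (I n) (d k))
        (idealRed (I n) (LinearMap.range (d k)).mkQ) ∧
      Module.Free (B ⧸ I n)
        ((F (k + 1) ⧸ LinearMap.range (d k)) ⧸
          ((I n) • (⊤ : Submodule B (F (k + 1) ⧸ LinearMap.range (d k)))))) ∧
    (∀ j : ℤ, j < k → Function.Exact (d j) (d (j + 1))) ∧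
    Function.Exact (d k) (LinearMap.range (d k)).mkQ ∧
    Module.Free B (F (k + 1) ⧸ LinearMap.range (d k)) :=
  stmt_8_general A B F d hdd k I hI h1 h3
end

section
/- Let Λ → A be a morphism of complete local Noetherian k-algebras with residue field k, presented as A = R/I with R = Λ[[X_1,…,X_s]] and I ⊆ m_Λ R + (X_1,…,X_s)². Then the elements of the subgroup Ext¹_A(Ω¹_{A/Λ}, M) ⊆ T¹_{A/Λ}(M) correspond exactly to those Λ-algebra extensions 0 → M → A' → A → 0 (with M² = 0) for which the Jacobi map j : M → Ω¹_{A'/Λ} ⊗_{A'} A is injective. -/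
/-!
For a square-zero extension `0 → M → A' → A → 0` the conormal sequence
`M = I/I² → A ⊗_{A'} Ω_{A'/Λ} → Ω_{A/Λ} → 0` is exact, and its first map is the Jacobi map `j`
(via `A ⊗_{A'} Ω_{A'/Λ} ≅ Ω_{A'/Λ}/(ker π)Ω_{A'/Λ}`). If `j` is injective, this sequence is a
module extension `E` of `Ω_{A/Λ}` by `M`, and the graph `x ↦ (π x, 1 ⊗ dx)` of the universal
derivation embeds `A'` into `A[E]` as the fibre product `A ×_{Ω_{A/Λ}} E`. Conversely, for an
embedding `ρ : A' → A[E]` over `A`, the second component of `ρ` is a `Λ`-derivation `A' → E`; it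
factors through `Ω_{A'/Λ}/(ker π)Ω_{A'/Λ}` and restricts to the injection `M → E` on `M`, so `j`
is injective.
-/

open TensorProduct KaehlerDifferential

section QuotientBaseChange

variable {A B : Type*} [CommRing A] [CommRing B] [Algebra A B] (N : Type*) [AddCommGroup N]
  [Module A N]

noncomputable def TensorProduct.equivQuotKerSMulOfSurjective
    (h : Function.Surjective (algebraMap A B)) :
    B ⊗[A] N ≃ₗ[A] N ⧸ (RingHom.ker (algebraMap A B) • ⊤ : Submodule A N) :=
  (Ideal.quotientKerAlgEquivOfSurjective (f := Algebra.ofId A B) h).toLinearEquiv.symm.rTensor N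
    ≪≫ₗ quotTensorEquivQuotSMul N _

@[simp]
theorem TensorProduct.equivQuotKerSMulOfSurjective_one_tmul
    (h : Function.Surjective (algebraMap A B)) (y : N) :
    equivQuotKerSMulOfSurjective N h (1 ⊗ₜ y) = Submodule.Quotient.mk y := by
  change quotTensorEquivQuotSMul N _
    ((Ideal.quotientKerAlgEquivOfSurjective (f := Algebra.ofId A B) h).symm 1 ⊗ₜ y) = _
  rw [map_one]
  exact quotTensorEquivQuotSMul_mk_one_tmul _ y

end QuotientBaseChange

section Graph

variable {R A B E : Type*} [CommRing R] [CommRing A] [CommRing B] [Algebra R A] [Algebra A B]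
  [AddCommGroup E] [Module A E] [Module B E] [Module Bᵐᵒᵖ E] [IsCentralScalar B E]
  [IsScalarTower A B E] [Module R E]

variable (B) in
def Derivation.graph (d : Derivation R A E) : A →+* TrivSqZeroExt B E where
  toFun x := TrivSqZeroExt.inl (algebraMap A B x) + TrivSqZeroExt.inr (d x)
  map_one' := by simp
  map_mul' x y := TrivSqZeroExt.ext (by simp) <| by
    simp [TrivSqZeroExt.snd_mul, d.leibniz, op_smul_eq_smul, algebraMap_smul, add_comm]
  map_zero' := by simp
  map_add' x y := by simp only [map_add, TrivSqZeroExt.inl_add, TrivSqZeroExt.inr_add]; abel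

@[simp] theorem Derivation.fst_graph (d : Derivation R A E) (x : A) :
    (d.graph B x).fst = algebraMap A B x := by
  simp [Derivation.graph]

@[simp] theorem Derivation.snd_graph (d : Derivation R A E) (x : A) :
    (d.graph B x).snd = d x := by
  simp [Derivation.graph]

theorem Derivation.graph_algebraMap [Algebra R B] [IsScalarTower R A B] [IsScalarTower R B E]
    (d : Derivation R A E) (c : R) :
    d.graph B (algebraMap R A c) = algebraMap R (TrivSqZeroExt B E) c := by
  simp [Derivation.graph, TrivSqZeroExt.algebraMap_eq_inl', ← IsScalarTower.algebraMap_apply]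

end Graph

section SndDerivation

variable {R A B E : Type*} [CommRing R] [CommRing A] [CommRing B] [Algebra R A] [Algebra A B]
  [Algebra R B] [AddCommGroup E] [Module A E] [Module B E] [Module Bᵐᵒᵖ E]
  [IsCentralScalar B E] [IsScalarTower A B E] [Module R E] [IsScalarTower R B E]

def Derivation.ofTrivSqZeroExt (ρ : A →+* TrivSqZeroExt B E)
    (hfst : ∀ x, (ρ x).fst = algebraMap A B x)
    (halg : ∀ c : R, ρ (algebraMap R A c) = algebraMap R (TrivSqZeroExt B E) c) :
    Derivation R A E where
  toFun x := (ρ x).snd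
  map_add' x y := by simp
  map_smul' c x := by
    simp [Algebra.smul_def, halg, TrivSqZeroExt.algebraMap_eq_inl', TrivSqZeroExt.snd_mul]
  map_one_eq_zero' := by simp
  leibniz' x y := by
    simp [TrivSqZeroExt.snd_mul, hfst, op_smul_eq_smul, algebraMap_smul, add_comm]

@[simp] theorem Derivation.ofTrivSqZeroExt_apply (ρ : A →+* TrivSqZeroExt B E)
    (hfst : ∀ x, (ρ x).fst = algebraMap A B x)
    (halg : ∀ c : R, ρ (algebraMap R A c) = algebraMap R (TrivSqZeroExt B E) c) (x : A) :
    Derivation.ofTrivSqZeroExt ρ hfst halg x = (ρ x).snd := rfl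

end SndDerivation

section Jacobi

variable (R : Type*) {A B : Type*} [CommRing R] [CommRing A] [CommRing B] [Algebra R A]
  [Algebra A B] {M : Type*} [AddCommGroup M]

variable (B) in
noncomputable def jacobiMap (ι : M →+ A) :
    M →+ Ω[A⁄R] ⧸ (RingHom.ker (algebraMap A B) • ⊤ : Submodule A Ω[A⁄R]) :=
  ((Submodule.mkQ _).toAddMonoidHom.comp (D R A : A →ₗ[R] Ω[A⁄R]).toAddMonoidHom).comp ι

variable (A B) in
noncomputable def KaehlerDifferential.tensorD [Algebra R B] [IsScalarTower R A B] :
    Derivation R A (B ⊗[A] Ω[A⁄R]) :=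
  (TensorProduct.mk A B Ω[A⁄R] 1).compDer (D R A)

variable [Algebra R B] [IsScalarTower R A B]

@[simp] theorem KaehlerDifferential.tensorD_apply (x : A) :
    tensorD R A B x = 1 ⊗ₜ D R A x := rfl

theorem KaehlerDifferential.mapBaseChange_tensorD (x : A) :
    mapBaseChange R A B (tensorD R A B x) = D R B (algebraMap A B x) := by
  simp

variable {ι : M →+ A}

theorem injective_jacobiMap_of_trivSqZeroExt {E : Type*} [AddCommGroup E] [Module B E]
    [Module Bᵐᵒᵖ E] [IsCentralScalar B E] [Module R E] [IsScalarTower R B E]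
    (ρ : A →+* TrivSqZeroExt B E) (hfst : ∀ x, (ρ x).fst = algebraMap A B x)
    (halg : ∀ c : R, ρ (algebraMap R A c) = algebraMap R (TrivSqZeroExt B E) c)
    (inc : M → E) (hinc : Function.Injective inc)
    (hρι : ∀ m, ρ (ι m) = TrivSqZeroExt.inr (inc m)) :
    Function.Injective (jacobiMap R B ι) := by
  let _ : Module A E := Module.compHom E (algebraMap A B)
  have _ : IsScalarTower A B E := ⟨fun a b e => by
    change (a • b) • e = algebraMap A B a • b • e
    rw [Algebra.smul_def, mul_smul]⟩
  have _ : IsScalarTower R A E := ⟨fun c a e => by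
    change algebraMap A B (c • a) • e = c • algebraMap A B a • e
    rw [Algebra.smul_def, map_mul, ← IsScalarTower.algebraMap_apply, mul_smul, algebraMap_smul]⟩
  let δ := (Derivation.ofTrivSqZeroExt ρ hfst halg).liftKaehlerDifferential
  -- `A` acts on `E` through `B`, so `ker (A → B)` kills `E`.
  have hδ : (RingHom.ker (algebraMap A B) • ⊤ : Submodule A Ω[A⁄R]) ≤ LinearMap.ker δ :=
    Submodule.smul_le.2 fun a ha _ _ => by
      rw [LinearMap.mem_ker, map_smul]
      change (algebraMap A B a • _ : E) = 0
      rw [RingHom.mem_ker.1 ha, zero_smul]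
  refine .of_comp (f := Submodule.liftQ _ δ hδ) ?_
  convert hinc using 1
  funext m
  simp [jacobiMap, δ, hρι]

variable [Module B M]

noncomputable def jacobiTensor (hB : Function.Surjective (algebraMap A B))
    (hι : ∀ m, algebraMap A B (ι m) = 0) (hιsmul : ∀ a m, ι (algebraMap A B a • m) = a * ι m) :
    M →ₗ[B] B ⊗[A] Ω[A⁄R] where
  toFun m := tensorD R A B (ι m)
  map_add' m₁ m₂ := by simp only [map_add]
  map_smul' b m := by
    obtain ⟨a, rfl⟩ := hB b
    rw [hιsmul, Derivation.leibniz, RingHom.id_apply, algebraMap_smul, add_eq_left, tensorD_apply,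
      smul_tmul', Algebra.smul_def, mul_one, hι, zero_tmul]

@[simp] theorem jacobiTensor_apply (hB : Function.Surjective (algebraMap A B))
    (hι : ∀ m, algebraMap A B (ι m) = 0) (hιsmul : ∀ a m, ι (algebraMap A B a • m) = a * ι m)
    (m : M) : jacobiTensor R hB hι hιsmul m = 1 ⊗ₜ D R A (ι m) := rfl

theorem injective_jacobiTensor_iff (hB : Function.Surjective (algebraMap A B))
    (hι : ∀ m, algebraMap A B (ι m) = 0) (hιsmul : ∀ a m, ι (algebraMap A B a • m) = a * ι m) :
    Function.Injective (jacobiTensor R hB hι hιsmul) ↔ Function.Injective (jacobiMap R B ι) := by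
  rw [← EquivLike.comp_injective _ (equivQuotKerSMulOfSurjective Ω[A⁄R] hB)]
  exact Iff.of_eq (congrArg _ (funext fun m => equivQuotKerSMulOfSurjective_one_tmul _ hB _))

theorem exact_jacobiTensor_mapBaseChange (hB : Function.Surjective (algebraMap A B))
    (hιker : ∀ x, algebraMap A B x = 0 ↔ x ∈ Set.range ι)
    (hιsmul : ∀ a m, ι (algebraMap A B a • m) = a * ι m) :
    Function.Exact (jacobiTensor R hB (fun m => (hιker _).2 ⟨m, rfl⟩) hιsmul)
      (mapBaseChange R A B) := by
  intro y
  rw [exact_kerCotangentToTensor_mapBaseChange R A B hB y]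
  constructor
  · rintro ⟨c, rfl⟩
    obtain ⟨⟨x, hx⟩, rfl⟩ := Ideal.toCotangent_surjective _ c
    obtain ⟨m, rfl⟩ := (hιker x).1 hx
    exact ⟨m, rfl⟩
  · rintro ⟨m, rfl⟩
    exact ⟨Ideal.toCotangent _ ⟨ι m, (hιker _).2 ⟨m, rfl⟩⟩, rfl⟩

theorem graph_tensorD_ι (hB : Function.Surjective (algebraMap A B))
    (hι : ∀ m, algebraMap A B (ι m) = 0) (hιsmul : ∀ a m, ι (algebraMap A B a • m) = a * ι m)
    (m : M) :
    (tensorD R A B).graph B (ι m) = TrivSqZeroExt.inr (jacobiTensor R hB hι hιsmul m) :=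
  TrivSqZeroExt.ext (by simp [hι]) (by simp)

theorem injective_graph_tensorD (hB : Function.Surjective (algebraMap A B))
    (hιker : ∀ x, algebraMap A B x = 0 ↔ x ∈ Set.range ι)
    (hιsmul : ∀ a m, ι (algebraMap A B a • m) = a * ι m)
    (hinj : Function.Injective (jacobiTensor R hB (fun m => (hιker _).2 ⟨m, rfl⟩) hιsmul)) :
    Function.Injective ((tensorD R A B).graph B) := by
  have hι : ∀ m, algebraMap A B (ι m) = 0 := fun m => (hιker _).2 ⟨m, rfl⟩
  refine (injective_iff_map_eq_zero _).2 fun x hx => ?_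
  obtain ⟨m, rfl⟩ := (hιker x).1 (by simpa using congrArg TrivSqZeroExt.fst hx)
  rw [graph_tensorD_ι R hB hι hιsmul, ← TrivSqZeroExt.inr_zero,
    TrivSqZeroExt.inr_injective.eq_iff, ← map_zero (jacobiTensor R hB hι hιsmul), hinj.eq_iff] at hx
  rw [hx, map_zero]

theorem mem_range_graph_tensorD (hB : Function.Surjective (algebraMap A B))
    (hιker : ∀ x, algebraMap A B x = 0 ↔ x ∈ Set.range ι)
    (hιsmul : ∀ a m, ι (algebraMap A B a • m) = a * ι m)
    (y : TrivSqZeroExt B (B ⊗[A] Ω[A⁄R])) (hy : D R B y.fst = mapBaseChange R A B y.snd) :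
    y ∈ Set.range ((tensorD R A B).graph B) := by
  have hι : ∀ m, algebraMap A B (ι m) = 0 := fun m => (hιker _).2 ⟨m, rfl⟩
  obtain ⟨x, hx⟩ := hB y.fst
  obtain ⟨m, hm⟩ := (exact_jacobiTensor_mapBaseChange R hB hιker hιsmul
    (y.snd - tensorD R A B x)).1 (by rw [map_sub, mapBaseChange_tensorD, hx, hy, sub_self])
  refine ⟨x + ι m, TrivSqZeroExt.ext ?_ ?_⟩
  · simp [hx, hι]
  · rw [map_add, TrivSqZeroExt.snd_add, graph_tensorD_ι R hB hι hιsmul, TrivSqZeroExt.snd_inr, hm,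
      Derivation.snd_graph, add_sub_cancel]

end Jacobi

open IsLocalRing

theorem stmt_17_general (Λ : Type) [CommRing Λ]
    (s : ℕ) (I : Ideal (MvPowerSeries (Fin s) Λ))
    -- the `A`-module `M`
    (M : Type) [AddCommGroup M] [Module (MvPowerSeries (Fin s) Λ ⧸ I) M]
    -- a square-zero `Λ`-algebra extension `A'` of `A = R/I` by `M`
    (A' : Type) [CommRing A'] [Algebra Λ A']
    (π : A' →ₐ[Λ] (MvPowerSeries (Fin s) Λ ⧸ I)) (hπ : Function.Surjective π)
    (ι : M →+ A')
    (hιker : ∀ x : A', π x = 0 ↔ x ∈ Set.range ι)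
    (hιlin : ∀ (a' : A') (m : M), ι (π a' • m) = a' * ι m) :
    -- the Jacobi map is injective …
    (Function.Injective (fun m : M =>
      Submodule.Quotient.mk
        (p := ((RingHom.ker π.toRingHom) • ⊤ : Submodule A' (Ω[A'⁄Λ])))
        ((KaehlerDifferential.D Λ A') (ι m)))) ↔
    -- … iff the extension arises from a module extension `0 → M → E → Ω¹_{A/Λ} → 0`
    (∃ (E : Type) (_ : AddCommGroup E) (_ : Module (MvPowerSeries (Fin s) Λ ⧸ I) E)
        (_ : Module Λ E) (_ : IsScalarTower Λ (MvPowerSeries (Fin s) Λ ⧸ I) E)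
        (_ : Module (MvPowerSeries (Fin s) Λ ⧸ I)ᵐᵒᵖ E)
        (_ : IsCentralScalar (MvPowerSeries (Fin s) Λ ⧸ I) E)
        (q : E →ₗ[MvPowerSeries (Fin s) Λ ⧸ I] Ω[(MvPowerSeries (Fin s) Λ ⧸ I)⁄Λ])
        (inc : M →ₗ[MvPowerSeries (Fin s) Λ ⧸ I] E),
      Function.Surjective q ∧ Function.Injective inc ∧ Function.Exact inc q ∧
      ∃ ρ : A' →+* TrivSqZeroExt (MvPowerSeries (Fin s) Λ ⧸ I) E,
        Function.Injective ρ ∧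
        (∀ x : A', (ρ x).fst = π x) ∧
        (∀ x : A', (KaehlerDifferential.D Λ (MvPowerSeries (Fin s) Λ ⧸ I)) (ρ x).fst =
          q (ρ x).snd) ∧
        (∀ m : M, ρ (ι m) = TrivSqZeroExt.inr (inc m)) ∧
        (∀ c : Λ, ρ (algebraMap Λ A' c) =
          algebraMap Λ (TrivSqZeroExt (MvPowerSeries (Fin s) Λ ⧸ I) E) c) ∧
        (∀ y : TrivSqZeroExt (MvPowerSeries (Fin s) Λ ⧸ I) E,
          (KaehlerDifferential.D Λ (MvPowerSeries (Fin s) Λ ⧸ I)) y.fst = q y.snd →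
          y ∈ Set.range ρ)) := by
  let _ : Algebra A' (MvPowerSeries (Fin s) Λ ⧸ I) := π.toAlgebra
  have _ : IsScalarTower Λ A' (MvPowerSeries (Fin s) Λ ⧸ I) :=
    .of_algebraMap_eq fun c => (π.commutes c).symm
  have hι : ∀ m, π (ι m) = 0 := fun m => (hιker _).2 ⟨m, rfl⟩
  constructor
  · intro hj
    have hinj := (injective_jacobiTensor_iff Λ hπ hι hιlin).2 hj
    refine ⟨_, inferInstance, inferInstance, inferInstance, inferInstance, inferInstance,
      inferInstance, mapBaseChange Λ A' _, jacobiTensor Λ hπ hι hιlin, ?_, ?_, ?_,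
      (tensorD Λ A' _).graph _, ?_, ?_, ?_, ?_, ?_, ?_⟩
    exacts [mapBaseChange_surjective Λ A' _ hπ, hinj,
      exact_jacobiTensor_mapBaseChange Λ hπ hιker hιlin,
      injective_graph_tensorD Λ hπ hιker hιlin hinj, Derivation.fst_graph _,
      fun x => by simp, graph_tensorD_ι Λ hπ hι hιlin,
      Derivation.graph_algebraMap _, mem_range_graph_tensorD Λ hπ hιker hιlin]
  · rintro ⟨E, _, _, _, _, _, _, q, inc, -, hinc, -, ρ, -, hfst, -, hρι, hρalg, -⟩
    exact injective_jacobiMap_of_trivSqZeroExt Λ ρ hfst hρalg inc hinc hρι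

/-- Let `Λ → A` be a morphism of complete local Noetherian `k`-algebras with residue field
`k`, presented as `A = R/I` with `R = Λ[[X_1,…,X_s]]` and `I ⊆ m_Λ R + (X)²`.  A
`Λ`-algebra extension `0 → M → A' → A → 0` (square zero) has its class in the subgroup
`Ext¹_A(Ω¹_{A/Λ}, M) ⊆ T¹_{A/Λ}(M)` — i.e. it arises from a module extension
`0 → M → E → Ω¹_{A/Λ} → 0` via the fibre-product construction inside the trivial square
zero extension `A[E]` — if and only if the Jacobi map
`j : M → Ω¹_{A'/Λ} ⊗_{A'} A = Ω¹_{A'/Λ}/(ker π)·Ω¹_{A'/Λ}` is injective. -/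
theorem stmt_17 (k Λ : Type) [Field k] [CommRing Λ] [Algebra k Λ]
    [IsLocalRing Λ] [IsNoetherianRing Λ] [IsAdicComplete (maximalIdeal Λ) Λ]
    (hΛres : Function.Bijective ((Ideal.Quotient.mk (maximalIdeal Λ)).comp (algebraMap k Λ)))
    (s : ℕ) (I : Ideal (MvPowerSeries (Fin s) Λ))
    (hI : I ≤ Ideal.map (algebraMap Λ (MvPowerSeries (Fin s) Λ)) (maximalIdeal Λ) ⊔
      (Ideal.span (Set.range (MvPowerSeries.X : Fin s → MvPowerSeries (Fin s) Λ))) ^ 2)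
    -- the `A`-module `M`
    (M : Type) [AddCommGroup M] [Module (MvPowerSeries (Fin s) Λ ⧸ I) M]
    [Module.Finite (MvPowerSeries (Fin s) Λ ⧸ I) M]
    -- a square-zero `Λ`-algebra extension `A'` of `A = R/I` by `M`
    (A' : Type) [CommRing A'] [Algebra Λ A']
    (π : A' →ₐ[Λ] (MvPowerSeries (Fin s) Λ ⧸ I)) (hπ : Function.Surjective π)
    (hsq : ∀ x y : A', π x = 0 → π y = 0 → x * y = 0)
    (ι : M →+ A') (hιinj : Function.Injective ι)
    (hιker : ∀ x : A', π x = 0 ↔ x ∈ Set.range ι)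
    (hιlin : ∀ (a' : A') (m : M), ι (π a' • m) = a' * ι m) :
    -- the Jacobi map is injective …
    (Function.Injective (fun m : M =>
      Submodule.Quotient.mk
        (p := ((RingHom.ker π.toRingHom) • ⊤ : Submodule A' (Ω[A'⁄Λ])))
        ((KaehlerDifferential.D Λ A') (ι m)))) ↔
    -- … iff the extension arises from a module extension `0 → M → E → Ω¹_{A/Λ} → 0`
    (∃ (E : Type) (_ : AddCommGroup E) (_ : Module (MvPowerSeries (Fin s) Λ ⧸ I) E)
        (_ : Module Λ E) (_ : IsScalarTower Λ (MvPowerSeries (Fin s) Λ ⧸ I) E)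
        (_ : Module (MvPowerSeries (Fin s) Λ ⧸ I)ᵐᵒᵖ E)
        (_ : IsCentralScalar (MvPowerSeries (Fin s) Λ ⧸ I) E)
        (q : E →ₗ[MvPowerSeries (Fin s) Λ ⧸ I] Ω[(MvPowerSeries (Fin s) Λ ⧸ I)⁄Λ])
        (inc : M →ₗ[MvPowerSeries (Fin s) Λ ⧸ I] E),
      Function.Surjective q ∧ Function.Injective inc ∧ Function.Exact inc q ∧
      ∃ ρ : A' →+* TrivSqZeroExt (MvPowerSeries (Fin s) Λ ⧸ I) E,
        Function.Injective ρ ∧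
        (∀ x : A', (ρ x).fst = π x) ∧
        (∀ x : A', (KaehlerDifferential.D Λ (MvPowerSeries (Fin s) Λ ⧸ I)) (ρ x).fst =
          q (ρ x).snd) ∧
        (∀ m : M, ρ (ι m) = TrivSqZeroExt.inr (inc m)) ∧
        (∀ c : Λ, ρ (algebraMap Λ A' c) =
          algebraMap Λ (TrivSqZeroExt (MvPowerSeries (Fin s) Λ ⧸ I) E) c) ∧
        (∀ y : TrivSqZeroExt (MvPowerSeries (Fin s) Λ ⧸ I) E,
          (KaehlerDifferential.D Λ (MvPowerSeries (Fin s) Λ ⧸ I)) y.fst = q y.snd →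
          y ∈ Set.range ρ)) :=
  stmt_17_general Λ s I M A' π hπ ι hιker hιlin
end
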